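/- arXiv:2402.09117 — 3 statements merged into one kernel-verified Lean document; each statement's English description precedes it below -/
import Mathlib

section
/- Let W be a channel with arbitrary input alphabet 𝒳 and finite output alphabet 𝒴, let n ≥ 1 be a block length, let 0 < δ ≤ √n · log₂|𝒴|, and let x^n ∈ 𝒳^n. Then the product output distribution satisfies W_{x^n}(𝒯_{x^n}^δ) ≥ 1 − 2 · 2^{−δ²/(36·K(|𝒴|))}, where K(d) = (log₂ max{d,3})². -/
open Real Filter

namespace DIChannel

variable {X Y : Type*}

/-- `p` is a probability distribution on the finite alphabet `Y`. -/
def IsDist [Fintype Y] (p : Y → ℝ) : Prop := (∀ y, 0 ≤ p y) ∧ ∑ y, p y = 1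

/-- Product (memoryless) output distribution `W_{x^n}` on `Y^n`. -/
noncomputable def prodP [Fintype Y] (W : X → Y → ℝ) {n : ℕ} (u : Fin n → X)
    (y : Fin n → Y) : ℝ := ∏ i, W (u i) (y i)

/-- Probability of a set of output words under `W_{x^n}`. -/
noncomputable def probOf [Fintype Y] (W : X → Y → ℝ) {n : ℕ} (u : Fin n → X)
    (E : Finset (Fin n → Y)) : ℝ := ∑ y ∈ E, prodP W u y

/-- Shannon entropy, base 2. -/
noncomputable def H2 [Fintype Y] (p : Y → ℝ) : ℝ := -∑ y, p y * Real.logb 2 (p y)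

/-- `H(W_{x^n}) = ∑ i H(W_{x_i})`. -/
noncomputable def Hn [Fintype Y] (W : X → Y → ℝ) {n : ℕ} (u : Fin n → X) : ℝ :=
  ∑ i, H2 (W (u i))

open scoped Classical in
/-- The entropy conditional typical set `𝒯_{x^n}^δ` (points of zero probability excluded). -/
noncomputable def typSet [Fintype Y] (W : X → Y → ℝ) {n : ℕ} (u : Fin n → X) (δ : ℝ) :
    Finset (Fin n → Y) :=
  Finset.univ.filter fun y =>
    0 < prodP W u y ∧ |Real.logb 2 (prodP W u y) + Hn W u| ≤ δ * Real.sqrt n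

/-- `K(d) = (log₂ max{d,3})²`. -/
noncomputable def Kf (d : ℕ) : ℝ := (Real.logb 2 (max d 3 : ℕ)) ^ 2

end DIChannel

open DIChannel

/-!
Chernoff bound for the information density `ℓ(y) = -ln W_{x^n}(y)`. Its moment generating
function `∑ W_{x^n}^{1-s}` factorises over the letters. For a single distribution `p` on `d`
points, `eˣ ≤ 1 + x + x² e^{|x|}` and the tilted second-moment bound
`∑ p (ln p)² p^{-|s|} ≤ 10 L²` (with `L = ln max{d,3}` and `|s| L ≤ 1/20`) give
`∑ p^{1-s} ≤ exp (s H + 10 s² L²)`, with `H` the entropy in nats. So `ℓ` is sub-Gaussian around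
`H(W_{x^n}) ln 2`, and Markov's inequality for `W_{x^n}^{1 ∓ t}` at the optimal `t` bounds each
tail of the deviation `r = δ √n ln 2` by `exp (-(δ ln 2)² / (40 L²))`, which is at most
`2^{-δ²/(36 K)}` because `40 ln 2 ≤ 36`.
-/

lemma exp_le_one_add_add_sq_mul_exp_abs (x : ℝ) : exp x ≤ 1 + x + x ^ 2 * exp |x| := by
  have h₁ : exp x - 1 ≤ x * exp x := by
    have h := mul_le_mul_of_nonneg_left (one_sub_le_exp_neg x) (exp_pos x).le
    rw [← exp_add, add_neg_cancel, exp_zero] at h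
    linarith
  have h₂ := add_one_le_exp x
  rcases le_total 0 x with hx | hx
  · rw [abs_of_nonneg hx]
    nlinarith [mul_le_mul_of_nonneg_left h₁ hx]
  · have : 1 ≤ exp |x| := one_le_exp (abs_nonneg x)
    nlinarith [sq_nonneg x]

lemma sq_mul_exp_neg_mul_le_of_le {a v w : ℝ} (ha : 0 < a) (hw : 2 ≤ a * w) (hwv : w ≤ v) :
    v ^ 2 * exp (-(a * v)) ≤ w ^ 2 * exp (-(a * w)) := by
  have hw₀ : 0 < w := by nlinarith
  have hv : v ≤ w * exp (a * (v - w) / 2) := by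
    nlinarith [add_one_le_exp (a * (v - w) / 2)]
  have hv2 : v ^ 2 ≤ w ^ 2 * exp (a * (v - w)) := by
    calc v ^ 2 ≤ (w * exp (a * (v - w) / 2)) ^ 2 := pow_le_pow_left₀ (by linarith) hv 2
      _ = w ^ 2 * exp (a * (v - w)) := by rw [mul_pow, sq (exp _), ← exp_add]; ring_nf
  calc v ^ 2 * exp (-(a * v)) ≤ w ^ 2 * exp (a * (v - w)) * exp (-(a * v)) := by gcongr
    _ = w ^ 2 * exp (-(a * w)) := by rw [mul_assoc, ← exp_add]; ring_nf

lemma sq_mul_exp_neg_one_sub_mul_le {v t L : ℝ} (hv : 0 ≤ v) (hL : 1 ≤ L) (ht : 0 ≤ t)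
    (htL : t * L ≤ 1 / 20) :
    v ^ 2 * exp (-((1 - t) * v)) ≤ 50 / 7 * L ^ 2 * (exp (-v) + exp (-(5 / 2 * L))) := by
  -- `(5/2)² e^{1/8} ≤ 50/7`, and beyond `5L/2` the map `v ↦ v² e^{-(1-t)v}` is decreasing.
  have below : ∀ x, 0 ≤ x → x ≤ 5 / 2 * L →
      x ^ 2 * exp (-((1 - t) * x)) ≤ 50 / 7 * L ^ 2 * exp (-x) := by
    intro x hx₀ hx
    have hexp : exp (t * x) ≤ 8 / 7 :=
      calc exp (t * x) ≤ exp (1 / 8) := exp_le_exp.mpr (by nlinarith)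
        _ ≤ 1 / (1 - 1 / 8) := exp_bound_div_one_sub_of_interval (by norm_num) (by norm_num)
        _ = 8 / 7 := by norm_num
    have hx2 : x ^ 2 ≤ 25 / 4 * L ^ 2 := by nlinarith
    calc x ^ 2 * exp (-((1 - t) * x)) = x ^ 2 * exp (t * x) * exp (-x) := by
          rw [mul_assoc, ← exp_add]; ring_nf
      _ ≤ 25 / 4 * L ^ 2 * (8 / 7) * exp (-x) := by gcongr
      _ = 50 / 7 * L ^ 2 * exp (-x) := by ring
  have hpos : 0 ≤ 50 / 7 * L ^ 2 * exp (-v) := by positivity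
  have hpos' : 0 ≤ 50 / 7 * L ^ 2 * exp (-(5 / 2 * L)) := by positivity
  rcases le_total v (5 / 2 * L) with hvL | hvL
  · nlinarith [below v hv hvL]
  · have ht1 : t ≤ 1 / 20 := by nlinarith
    calc v ^ 2 * exp (-((1 - t) * v)) ≤ (5 / 2 * L) ^ 2 * exp (-((1 - t) * (5 / 2 * L))) :=
          sq_mul_exp_neg_mul_le_of_le (by linarith) (by nlinarith) hvL
      _ ≤ 50 / 7 * L ^ 2 * exp (-(5 / 2 * L)) := below _ (by positivity) le_rfl
      _ ≤ _ := by nlinarith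

lemma exp_neg_sq_div_le_two_rpow (δ : ℝ) {L : ℝ} (hL : 0 < L) :
    exp (-((log 2 * δ) ^ 2 / (40 * L ^ 2))) ≤ 2 ^ (-δ ^ 2 / (36 * (L / log 2) ^ 2)) := by
  rw [rpow_def_of_pos two_pos, exp_le_exp]
  have hrhs : log 2 * (-δ ^ 2 / (36 * (L / log 2) ^ 2)) = -(log 2 ^ 3 * δ ^ 2 / (36 * L ^ 2)) := by
    field_simp
  rw [hrhs, neg_le_neg_iff, div_le_div_iff₀ (by positivity) (by positivity)]
  have : 0 ≤ log 2 ^ 2 * δ ^ 2 * L ^ 2 := by positivity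
  nlinarith [log_two_gt_d9, log_two_lt_d9]

lemma one_le_log_max_three (d : ℕ) : 1 ≤ log (max d 3 : ℕ) := by
  have h3 : (3 : ℝ) ≤ (max d 3 : ℕ) := by exact_mod_cast le_max_right d 3
  have : 1 < log 3 := by
    rw [lt_log_iff_exp_lt (by norm_num)]
    linarith [exp_one_lt_d9]
  linarith [log_le_log (by norm_num) h3]

lemma pos_and_log_two_mul_le_of_le_sqrt_mul_logb {n d : ℕ} {δ : ℝ} (hδ₀ : 0 < δ)
    (hδ : δ ≤ √n * logb 2 d) : 0 < (n : ℝ) ∧ log 2 * δ ≤ √n * log (max d 3 : ℕ) := by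
  have hpos : 0 < √n * logb 2 d := hδ₀.trans_le hδ
  have hlogb : 0 < logb 2 d := pos_of_mul_pos_right hpos (sqrt_nonneg _)
  have hd : (0 : ℝ) < d := Nat.cast_pos.mpr (Nat.pos_of_ne_zero fun h => by simp [h] at hlogb)
  refine ⟨sqrt_pos.mp (pos_of_mul_pos_left hpos hlogb.le), ?_⟩
  calc log 2 * δ ≤ log 2 * (√n * (log d / log 2)) := by rw [log_div_log]; gcongr
    _ = √n * log d := by field_simp
    _ ≤ √n * log (max d 3 : ℕ) := by
        gcongr
        exact_mod_cast le_max_left d 3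

section Chernoff

variable {Ω : Type*} [Fintype Ω] {P : Ω → ℝ}

lemma sum_filter_le_exp_neg_mul_sum_rpow (hP : ∀ ω, 0 ≤ P ω) (s c : ℝ) :
    ∑ ω with 0 < P ω ∧ c ≤ s * -log (P ω), P ω ≤ exp (-c) * ∑ ω, P ω ^ (1 - s) := by
  rw [Finset.mul_sum]
  refine (Finset.sum_le_sum fun ω hω => ?_).trans
    (Finset.sum_le_sum_of_subset_of_nonneg (Finset.filter_subset _ _)
      fun ω _ _ => mul_nonneg (exp_pos _).le (rpow_nonneg (hP ω) _))
  obtain ⟨hpos, hc⟩ := (Finset.mem_filter.mp hω).2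
  calc P ω = exp (log (P ω)) := (exp_log hpos).symm
    _ ≤ exp (-c + log (P ω) * (1 - s)) := exp_le_exp.mpr (by linarith)
    _ = exp (-c) * P ω ^ (1 - s) := by rw [exp_add, rpow_def_of_pos hpos]

lemma sum_filter_lt_abs_neg_log_sub_le (hP : ∀ ω, 0 ≤ P ω) {A C r : ℝ} (hC : 0 < C)
    (hr : 0 ≤ r)
    (hmgf : ∀ s, |s| ≤ r / (2 * C) → ∑ ω, P ω ^ (1 - s) ≤ exp (s * A + C * s ^ 2)) :
    ∑ ω with 0 < P ω ∧ r < |-log (P ω) - A|, P ω ≤ 2 * exp (-(r ^ 2 / (4 * C))) := by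
  classical
  set t := r / (2 * C) with ht
  have ht₀ : 0 ≤ t := by positivity
  let tail (s : ℝ) := Finset.univ.filter fun ω => 0 < P ω ∧ s * A + t * r ≤ s * -log (P ω)
  have htail : ∀ s, |s| = t → ∑ ω ∈ tail s, P ω ≤ exp (-(r ^ 2 / (4 * C))) := by
    intro s hs
    have hs2 : s ^ 2 = t ^ 2 := by rw [← sq_abs, hs]
    calc ∑ ω ∈ tail s, P ω ≤ exp (-(s * A + t * r)) * ∑ ω, P ω ^ (1 - s) :=
          sum_filter_le_exp_neg_mul_sum_rpow hP s _
      _ ≤ exp (-(s * A + t * r)) * exp (s * A + C * s ^ 2) := by gcongr; exact hmgf s hs.le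
      _ = exp (-(r ^ 2 / (4 * C))) := by
          rw [← exp_add, hs2, ht]
          congr 1
          field_simp
          ring
  have hsub : (Finset.univ.filter fun ω => 0 < P ω ∧ r < |-log (P ω) - A|)
      ⊆ tail t ∪ tail (-t) := by
    intro ω hω
    obtain ⟨hpos, hdev⟩ := (Finset.mem_filter.mp hω).2
    simp only [tail, Finset.mem_union, Finset.mem_filter, Finset.mem_univ, true_and]
    rcases lt_abs.mp hdev with h | h
    · exact Or.inl ⟨hpos, by nlinarith⟩
    · exact Or.inr ⟨hpos, by nlinarith⟩
  calc ∑ ω with 0 < P ω ∧ r < |-log (P ω) - A|, P ω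
      ≤ ∑ ω ∈ tail t ∪ tail (-t), P ω :=
        Finset.sum_le_sum_of_subset_of_nonneg hsub fun ω _ _ => hP ω
    _ ≤ ∑ ω ∈ tail t, P ω + ∑ ω ∈ tail (-t), P ω := by
        rw [← Finset.sum_union_inter]
        exact le_add_of_nonneg_right (Finset.sum_nonneg fun ω _ => hP ω)
    _ ≤ 2 * exp (-(r ^ 2 / (4 * C))) := by
        linarith [htail t (abs_of_nonneg ht₀), htail (-t) (by rw [abs_neg, abs_of_nonneg ht₀])]

end Chernoff

namespace DIChannel

section SingleLetter

variable {Y : Type*} [Fintype Y] {p : Y → ℝ}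

lemma IsDist.le_one (hp : IsDist p) (y : Y) : p y ≤ 1 :=
  hp.2 ▸ Finset.single_le_sum (fun z _ => hp.1 z) (Finset.mem_univ y)

lemma H2_mul_log_two (p : Y → ℝ) : H2 p * log 2 = ∑ y, negMulLog (p y) := by
  rw [H2, neg_mul, Finset.sum_mul, ← Finset.sum_neg_distrib]
  refine Finset.sum_congr rfl fun y _ => ?_
  rw [negMulLog, logb]
  field_simp

lemma IsDist.sum_mul_log_sq_mul_exp_le (hp : IsDist p) {t L : ℝ} (hL : 1 ≤ L)
    (hcard : (Fintype.card Y : ℝ) ≤ exp L) (ht : 0 ≤ t) (htL : t * L ≤ 1 / 20) :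
    ∑ y, p y * log (p y) ^ 2 * exp (-(t * log (p y))) ≤ 10 * L ^ 2 := by
  have hterm : ∀ y, p y * log (p y) ^ 2 * exp (-(t * log (p y)))
      ≤ 50 / 7 * L ^ 2 * (p y + exp (-(5 / 2 * L))) := by
    intro y
    rcases (hp.1 y).eq_or_lt with h | h
    · rw [← h, log_zero]
      simp only [zero_mul, zero_add]
      positivity
    · have hv : 0 ≤ -log (p y) := neg_nonneg.mpr (log_nonpos (hp.1 y) (hp.le_one y))
      calc p y * log (p y) ^ 2 * exp (-(t * log (p y)))
          = (-log (p y)) ^ 2 * exp (-((1 - t) * -log (p y))) := by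
            rw [show -((1 - t) * -log (p y)) = log (p y) + -(t * log (p y)) by ring, exp_add,
              exp_log h]
            ring
        _ ≤ 50 / 7 * L ^ 2 * (exp (-(-log (p y))) + exp (-(5 / 2 * L))) :=
            sq_mul_exp_neg_one_sub_mul_le hv hL ht htL
        _ = 50 / 7 * L ^ 2 * (p y + exp (-(5 / 2 * L))) := by rw [neg_neg, exp_log h]
  have htail : (Fintype.card Y : ℝ) * exp (-(5 / 2 * L)) ≤ 1 / 4 :=
    calc (Fintype.card Y : ℝ) * exp (-(5 / 2 * L)) ≤ exp L * exp (-(5 / 2 * L)) := by gcongr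
      _ = exp (-(3 / 2 * L)) := by rw [← exp_add]; ring_nf
      _ ≤ exp (-(3 / 2)) := exp_le_exp.mpr (by linarith)
      _ ≤ 1 / 4 := by
        rw [exp_neg, inv_le_comm₀ (exp_pos _) (by norm_num)]
        have : exp (3 / 2) = exp 1 * exp (1 / 2) := by rw [← exp_add]; norm_num
        nlinarith [exp_one_gt_d9, add_one_le_exp (1 / 2 : ℝ)]
  calc ∑ y, p y * log (p y) ^ 2 * exp (-(t * log (p y)))
      ≤ ∑ y, 50 / 7 * L ^ 2 * (p y + exp (-(5 / 2 * L))) := Finset.sum_le_sum fun y _ => hterm y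
    _ = 50 / 7 * L ^ 2 * (1 + Fintype.card Y * exp (-(5 / 2 * L))) := by
        rw [← Finset.mul_sum, Finset.sum_add_distrib, hp.2, Finset.sum_const, Finset.card_univ,
          nsmul_eq_mul]
    _ ≤ 10 * L ^ 2 := by nlinarith [sq_nonneg L]

lemma IsDist.sum_rpow_one_sub_le (hp : IsDist p) {s L : ℝ} (hL : 1 ≤ L)
    (hcard : (Fintype.card Y : ℝ) ≤ exp L) (hsL : |s| * L ≤ 1 / 20) :
    ∑ y, p y ^ (1 - s) ≤ exp (s * ∑ y, negMulLog (p y) + 10 * s ^ 2 * L ^ 2) := by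
  have hs : 1 - s ≠ 0 := by nlinarith [le_abs_self s, abs_nonneg s]
  have hterm : ∀ y, p y ^ (1 - s) ≤ p y + s * negMulLog (p y)
      + s ^ 2 * (p y * log (p y) ^ 2 * exp (-(|s| * log (p y)))) := by
    intro y
    rcases (hp.1 y).eq_or_lt with h | h
    · rw [← h, zero_rpow hs]
      simp
    · have habs : |-(s * log (p y))| = -(|s| * log (p y)) := by
        rw [abs_neg, abs_mul, abs_of_nonpos (log_nonpos (hp.1 y) (hp.le_one y))]
        ring
      calc p y ^ (1 - s) = p y * exp (-(s * log (p y))) := by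
            rw [rpow_def_of_pos h, mul_one_sub, sub_eq_add_neg, exp_add, exp_log h, mul_comm s]
        _ ≤ p y * (1 + -(s * log (p y)) + (-(s * log (p y))) ^ 2 * exp |-(s * log (p y))|) :=
            mul_le_mul_of_nonneg_left (exp_le_one_add_add_sq_mul_exp_abs _) (hp.1 y)
        _ = _ := by rw [habs, negMulLog]; ring
  have hM := hp.sum_mul_log_sq_mul_exp_le hL hcard (abs_nonneg s) hsL
  calc ∑ y, p y ^ (1 - s)
      ≤ ∑ y, (p y + s * negMulLog (p y)
          + s ^ 2 * (p y * log (p y) ^ 2 * exp (-(|s| * log (p y))))) :=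
        Finset.sum_le_sum fun y _ => hterm y
    _ = 1 + s * ∑ y, negMulLog (p y)
          + s ^ 2 * ∑ y, p y * log (p y) ^ 2 * exp (-(|s| * log (p y))) := by
        rw [Finset.sum_add_distrib, Finset.sum_add_distrib, hp.2, ← Finset.mul_sum,
          ← Finset.mul_sum]
    _ ≤ (s * ∑ y, negMulLog (p y) + 10 * s ^ 2 * L ^ 2) + 1 := by
        nlinarith [sq_nonneg s]
    _ ≤ _ := add_one_le_exp _

end SingleLetter

section Product

variable {X Y : Type*} [Fintype Y] {W : X → Y → ℝ} {n : ℕ} (u : Fin n → X)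

lemma sum_prodP_rpow (hW : ∀ x y, 0 ≤ W x y) (a : ℝ) :
    ∑ y, prodP W u y ^ a = ∏ i, ∑ y, W (u i) y ^ a := by
  rw [Fintype.prod_sum]
  exact Finset.sum_congr rfl fun y _ => (finsetProd_rpow _ _ (fun i _ => hW _ _) a).symm

lemma isDist_prodP (hW : ∀ x, IsDist (W x)) : IsDist (prodP W u) := by
  refine ⟨fun y => Finset.prod_nonneg fun i _ => (hW _).1 _, ?_⟩
  simpa [rpow_one, (hW _).2] using sum_prodP_rpow u (fun x => (hW x).1) 1

lemma sum_prodP_rpow_one_sub_le (hW : ∀ x, IsDist (W x)) {s L : ℝ} (hL : 1 ≤ L)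
    (hcard : (Fintype.card Y : ℝ) ≤ exp L) (hsL : |s| * L ≤ 1 / 20) :
    ∑ y, prodP W u y ^ (1 - s) ≤ exp (s * (Hn W u * log 2) + 10 * n * L ^ 2 * s ^ 2) := by
  rw [sum_prodP_rpow u (fun x => (hW x).1)]
  calc ∏ i, ∑ y, W (u i) y ^ (1 - s)
      ≤ ∏ i, exp (s * (H2 (W (u i)) * log 2) + 10 * s ^ 2 * L ^ 2) := by
        refine Finset.prod_le_prod (fun i _ => Finset.sum_nonneg fun y _ => ?_) fun i _ => ?_
        · exact rpow_nonneg ((hW _).1 y) _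
        · rw [H2_mul_log_two]
          exact (hW _).sum_rpow_one_sub_le hL hcard hsL
    _ = _ := by
        rw [← exp_sum, Finset.sum_add_distrib, ← Finset.mul_sum, ← Finset.sum_mul, ← Hn,
          Finset.sum_const, Finset.card_univ, Fintype.card_fin, nsmul_eq_mul]
        ring_nf

lemma probOf_typSet_add_sum_atypical (hW : ∀ x, IsDist (W x)) (δ : ℝ) :
    probOf W u (typSet W u δ) + ∑ y with 0 < prodP W u y ∧
      log 2 * (δ * √n) < |-log (prodP W u y) - Hn W u * log 2|, prodP W u y = 1 := by
  classical
  rw [← (isDist_prodP u hW).2, probOf, typSet,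
    ← Finset.sum_filter_add_sum_filter_not Finset.univ
      (fun y => 0 < prodP W u y ∧ |logb 2 (prodP W u y) + Hn W u| ≤ δ * √n)]
  congr 1
  rw [Finset.sum_filter, Finset.sum_filter]
  refine Finset.sum_congr rfl fun y _ => ?_
  rcases ((isDist_prodP u hW).1 y).eq_or_lt with h | h
  · simp [← h]
  · have hdev : |-log (prodP W u y) - Hn W u * log 2|
        = log 2 * |logb 2 (prodP W u y) + Hn W u| := by
      rw [show -log (prodP W u y) - Hn W u * log 2
          = -(log 2 * (logb 2 (prodP W u y) + Hn W u)) by rw [← log_div_log]; field_simp; ring,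
        abs_neg, abs_mul, abs_of_pos (log_pos one_lt_two)]
    simp [hdev, h, mul_lt_mul_iff_right₀ (log_pos one_lt_two)]

lemma sum_prodP_atypical_le (hW : ∀ x, IsDist (W x)) {δ L : ℝ} (hδ : 0 ≤ δ) (hL : 1 ≤ L)
    (hcard : (Fintype.card Y : ℝ) ≤ exp L) (hn : 0 < (n : ℝ)) (hδL : log 2 * δ ≤ √n * L) :
    ∑ y with 0 < prodP W u y ∧ log 2 * (δ * √n) < |-log (prodP W u y) - Hn W u * log 2|,
      prodP W u y ≤ 2 * exp (-((log 2 * δ) ^ 2 / (40 * L ^ 2))) := by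
  have hL₀ : 0 < L := by linarith
  have hexponent : (log 2 * (δ * √n)) ^ 2 / (4 * (10 * n * L ^ 2))
      = (log 2 * δ) ^ 2 / (40 * L ^ 2) := by
    rw [mul_pow, mul_pow, sq_sqrt hn.le]
    field_simp
    ring
  rw [← hexponent]
  refine sum_filter_lt_abs_neg_log_sub_le (isDist_prodP u hW).1 (by positivity)
    (by positivity) fun s hs => sum_prodP_rpow_one_sub_le u hW hL hcard ?_
  calc |s| * L ≤ log 2 * (δ * √n) / (2 * (10 * n * L ^ 2)) * L := by gcongr
    _ ≤ 1 / 20 := by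
      rw [div_mul_eq_mul_div, div_le_iff₀ (by positivity)]
      nlinarith [mul_le_mul_of_nonneg_right hδL (by positivity : 0 ≤ √n * L),
        mul_self_sqrt hn.le]

end Product

end DIChannel

theorem stmt0_general {X Y : Type*} [Fintype Y] (W : X → Y → ℝ) (hW : ∀ x, IsDist (W x))
    (n : ℕ) (δ : ℝ) (hδ0 : 0 < δ)
    (hδ : δ ≤ Real.sqrt n * Real.logb 2 (Fintype.card Y))
    (u : Fin n → X) :
    1 - 2 * (2 : ℝ) ^ (-δ ^ 2 / (36 * Kf (Fintype.card Y))) ≤ probOf W u (typSet W u δ) := by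
  obtain ⟨hn, hδL⟩ := pos_and_log_two_mul_le_of_le_sqrt_mul_logb hδ0 hδ
  rw [Kf, ← log_div_log]
  set L := log (max (Fintype.card Y) 3 : ℕ)
  have hL : 1 ≤ L := one_le_log_max_three _
  have hcard : (Fintype.card Y : ℝ) ≤ exp L := by
    rw [exp_log (Nat.cast_pos.mpr (lt_max_of_lt_right three_pos))]
    exact_mod_cast le_max_left _ 3
  linarith [probOf_typSet_add_sum_atypical u hW δ, sum_prodP_atypical_le u hW hδ0.le hL hcard hn hδL,
    exp_neg_sq_div_le_two_rpow δ (by linarith : 0 < L)]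

/-- Unit-probability bound for the entropy typical set (Lemma 1 of the paper). -/
theorem stmt0 {X Y : Type*} [Fintype Y] (W : X → Y → ℝ) (hW : ∀ x, IsDist (W x))
    (n : ℕ) (hn : 1 ≤ n) (δ : ℝ) (hδ0 : 0 < δ)
    (hδ : δ ≤ Real.sqrt n * Real.logb 2 (Fintype.card Y))
    (u : Fin n → X) :
    1 - 2 * (2 : ℝ) ^ (-δ ^ 2 / (36 * Kf (Fintype.card Y))) ≤ probOf W u (typSet W u δ) :=
  stmt0_general W hW n δ hδ0 hδ u
end

section
/- There exist nonempty compact sets F, G ⊆ [0,1] such that the lower Minkowski dimensions satisfy d̲_M(F) = 0 and d̲_M(G) = 0, the sumset satisfies F + G = [0,1], and consequently d̲_M(F × G) ≥ 1, where F × G ⊆ ℝ² carries the Euclidean metric. -/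
open Pointwise

/-- Covering number `Γ_δ(F)`: the minimal number of closed balls of radius `δ` with centers
in `F` whose union contains `F`; `⊤` if no finite such cover exists. -/
noncomputable def coverNum {α : Type*} [PseudoMetricSpace α] (F : Set α) (δ : ℝ) : ℕ∞ :=
  sInf {n : ℕ∞ | ∃ s : Finset α, ↑s ⊆ F ∧ (s.card : ℕ∞) = n ∧
    F ⊆ ⋃ x ∈ s, Metric.closedBall x δ}

/-- Lower Minkowski dimension `d̲_M(F) = liminf_{δ→0⁺} log Γ_δ(F)/(−log δ)`. -/
noncomputable def lowerMinkDim {α : Type*} [PseudoMetricSpace α] (F : Set α) : ℝ :=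
  Filter.liminf (fun δ : ℝ => Real.log ((coverNum F δ).toNat : ℝ) / (-Real.log δ))
    (nhdsWithin 0 (Set.Ioi 0))

/-!
Write the reals of `[0,1]` in binary and cut the digit positions into the blocks
`[k!, (k+1)!)`. Let `F` be the set of numbers whose nonzero digits all lie in even blocks and `G`
the same for odd blocks. Splitting the binary expansion of `x ∈ [0,1]` along the blocks gives
`F + G = [0,1]`. At scale `2^{-(k+1)!}` with `k` odd, `F` is covered by `2^{k!}` balls, one for
each choice of its free digits below `k!`, and `k!/(k+1)! → 0`, so `d̲_M(F) = 0`; the same holds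
for `G` along even `k`. Finally `(x, y) ↦ x + y` is Lipschitz and maps `F × G` onto `[0,1]`, so at
scale `δ` the product needs at least as many balls as `[0,1]` does at scale `2δ`, about `1/(4δ)`.
-/
open Filter Topology

def IsCenteredCover {α : Type*} [PseudoMetricSpace α] (F : Set α) (s : Finset α) (δ : ℝ) :
    Prop :=
  ↑s ⊆ F ∧ F ⊆ ⋃ x ∈ s, Metric.closedBall x δ

section CoverNum

variable {α β : Type*} [PseudoMetricSpace α] [PseudoMetricSpace β] {F : Set α} {δ : ℝ}

lemma coverNum_le_card {s : Finset α} (h : IsCenteredCover F s δ) : coverNum F δ ≤ s.card :=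
  sInf_le ⟨s, h.1, rfl, h.2⟩

lemma exists_isCenteredCover_card_eq (h : coverNum F δ ≠ ⊤) :
    ∃ s : Finset α, IsCenteredCover F s δ ∧ (s.card : ℕ∞) = coverNum F δ := by
  have hne : {n : ℕ∞ | ∃ s : Finset α, ↑s ⊆ F ∧ (s.card : ℕ∞) = n ∧
      F ⊆ ⋃ x ∈ s, Metric.closedBall x δ}.Nonempty := by
    refine Set.nonempty_iff_ne_empty.mpr fun hempty => h ?_
    rw [coverNum, hempty, sInf_empty]
  obtain ⟨s, hsF, hcard, hcover⟩ := csInf_mem hne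
  exact ⟨s, ⟨hsF, hcover⟩, hcard⟩

lemma IsCompact.coverNum_ne_top (hF : IsCompact F) (hδ : 0 < δ) : coverNum F δ ≠ ⊤ := by
  obtain ⟨t, htF, ht, hcover⟩ := Metric.finite_approx_of_totallyBounded hF.totallyBounded δ hδ
  refine ne_top_of_le_ne_top (ENat.natCast_ne_top ht.toFinset.card) (coverNum_le_card ⟨?_, ?_⟩)
  · simpa using htF
  · refine hcover.trans (Set.iUnion₂_mono' fun x hx => ⟨x, ht.mem_toFinset.mpr hx, ?_⟩)
    exact Metric.ball_subset_closedBall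

lemma coverNum_image_le {f : α → β} {K : NNReal} (hf : LipschitzWith K f) :
    coverNum (f '' F) (K * δ) ≤ coverNum F δ := by
  classical
  refine le_sInf ?_
  rintro n ⟨s, hsF, rfl, hcover⟩
  refine (coverNum_le_card (s := s.image f) ⟨?_, ?_⟩).trans (by exact_mod_cast s.card_image_le)
  · simpa using Set.image_mono hsF
  · rintro _ ⟨x, hx, rfl⟩
    obtain ⟨c, hc, hxc⟩ := Set.mem_iUnion₂.mp (hcover hx)
    refine Set.mem_biUnion (Finset.mem_image_of_mem f hc) ?_
    exact (hf.dist_le_mul x c).trans (by gcongr; exact hxc)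

end CoverNum

def euclideanProd (F G : Set ℝ) : Set (EuclideanSpace ℝ (Fin 2)) :=
  {p | p 0 ∈ F ∧ p 1 ∈ G}

section EuclideanProd

variable {F G : Set ℝ}

lemma isCompact_euclideanProd (hF : IsCompact F) (hG : IsCompact G) :
    IsCompact (euclideanProd F G) := by
  have hpi : euclideanProd F G = (EuclideanSpace.equiv (Fin 2) ℝ).toHomeomorph ⁻¹'
      Set.univ.pi ![F, G] := by
    ext p
    simp [euclideanProd, Fin.forall_fin_two]
  rw [hpi, Homeomorph.isCompact_preimage]
  exact isCompact_univ_pi fun i => by fin_cases i <;> assumption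

lemma coverNum_euclideanProd_le {δ : ℝ} (hδ : 0 ≤ δ) {s t : Finset ℝ}
    (hs : IsCenteredCover F s δ) (ht : IsCenteredCover G t δ) :
    coverNum (euclideanProd F G) (2 * δ) ≤ ((s.card * t.card : ℕ) : ℕ∞) := by
  classical
  refine (coverNum_le_card (s := (s ×ˢ t).image fun q => !₂[q.1, q.2]) ⟨?_, ?_⟩).trans ?_
  · intro p hp
    obtain ⟨⟨x, y⟩, hxy, rfl⟩ := Finset.mem_image.mp hp
    obtain ⟨hx, hy⟩ := Finset.mem_product.mp hxy
    exact ⟨hs.1 hx, ht.1 hy⟩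
  · rintro p ⟨hp0, hp1⟩
    obtain ⟨x, hx, hpx⟩ := Set.mem_iUnion₂.mp (hs.2 hp0)
    obtain ⟨y, hy, hpy⟩ := Set.mem_iUnion₂.mp (ht.2 hp1)
    have hxy : (x, y) ∈ s ×ˢ t := Finset.mem_product.mpr ⟨hx, hy⟩
    refine Set.mem_biUnion (Finset.mem_image_of_mem _ hxy) ?_
    rw [Metric.mem_closedBall] at hpx hpy ⊢
    rw [EuclideanSpace.dist_eq, Fin.sum_univ_two]
    refine Real.sqrt_le_iff.mpr ⟨by positivity, ?_⟩
    simp only [Matrix.cons_val_zero, Matrix.cons_val_one]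
    have h0 := dist_nonneg (x := p 0) (y := x)
    have h1 := dist_nonneg (x := p 1) (y := y)
    nlinarith
  · exact_mod_cast Finset.card_image_le.trans (Finset.card_product s t).le

lemma lipschitzWith_coord_add :
    LipschitzWith 2 fun p : EuclideanSpace ℝ (Fin 2) => p 0 + p 1 := by
  refine LipschitzWith.of_dist_le_mul fun p q => ?_
  calc dist (p 0 + p 1) (q 0 + q 1) ≤ dist (p 0) (q 0) + dist (p 1) (q 1) := dist_add_add_le ..
    _ ≤ ((2 : NNReal) : ℝ) * dist p q := by
      have := PiLp.dist_apply_le p q 0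
      have := PiLp.dist_apply_le p q 1
      push_cast
      linarith

lemma coord_add_image_euclideanProd :
    (fun p : EuclideanSpace ℝ (Fin 2) => p 0 + p 1) '' euclideanProd F G = F + G := by
  ext z
  constructor
  · rintro ⟨p, ⟨hp0, hp1⟩, rfl⟩
    exact Set.add_mem_add hp0 hp1
  · rintro ⟨x, hx, y, hy, rfl⟩
    exact ⟨!₂[x, y], ⟨hx, hy⟩, rfl⟩

lemma coverNum_le_coverNum_euclideanProd {δ : ℝ} :
    coverNum (F + G) (2 * δ) ≤ coverNum (euclideanProd F G) δ := by
  rw [← coord_add_image_euclideanProd]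
  exact_mod_cast coverNum_image_le lipschitzWith_coord_add

end EuclideanProd

lemma volume_le_card_mul_of_subset_iUnion_closedBall {F : Set ℝ} {s : Finset ℝ} {ε : ℝ}
    (h : F ⊆ ⋃ x ∈ s, Metric.closedBall x ε) :
    MeasureTheory.volume F ≤ s.card * ENNReal.ofReal (2 * ε) :=
  calc _ ≤ ∑ x ∈ s, MeasureTheory.volume (Metric.closedBall x ε) :=
        (MeasureTheory.measure_mono h).trans (MeasureTheory.measure_biUnion_finset_le _ _)
    _ = s.card * ENNReal.ofReal (2 * ε) := by simp [Real.volume_closedBall]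

lemma one_le_coverNum_Icc_mul {ε : ℝ} (hε : 0 < ε) :
    1 ≤ ((coverNum (Set.Icc (0 : ℝ) 1) ε).toNat : ℝ) * (2 * ε) := by
  obtain ⟨s, hs, hcard⟩ :=
    exists_isCenteredCover_card_eq ((isCompact_Icc (a := (0 : ℝ)) (b := 1)).coverNum_ne_top hε)
  have hvol := volume_le_card_mul_of_subset_iUnion_closedBall hs.2
  rw [Real.volume_Icc, sub_zero, ENNReal.ofReal_one, ← ENNReal.ofReal_natCast,
    ← ENNReal.ofReal_mul (by positivity), ENNReal.one_le_ofReal] at hvol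
  rwa [← hcard, ENat.toNat_natCast]

-- `lowerMinkDim F` is by definition `liminf (minkRatio F) (𝓝[>] 0)`.
noncomputable def minkRatio {α : Type*} [PseudoMetricSpace α] (F : Set α) (δ : ℝ) : ℝ :=
  Real.log ((coverNum F δ).toNat : ℝ) / (-Real.log δ)

section MinkRatio

variable {α : Type*} [PseudoMetricSpace α] {F : Set α} {δ c : ℝ}

lemma minkRatio_nonneg (h0 : 0 < δ) (h1 : δ < 1) : 0 ≤ minkRatio F δ :=
  div_nonneg (Real.log_natCast_nonneg _) (neg_nonneg.mpr (Real.log_nonpos h0.le h1.le))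

lemma eventually_minkRatio_nonneg : ∀ᶠ δ in 𝓝[>] 0, 0 ≤ minkRatio F δ := by
  filter_upwards [Ioo_mem_nhdsGT (zero_lt_one' ℝ)] with δ hδ
  exact minkRatio_nonneg hδ.1 hδ.2

lemma minkRatio_le_of_coverNum_le {N : ℕ} (h0 : 0 < δ) (h1 : δ < 1) (hN : coverNum F δ ≤ N) :
    minkRatio F δ ≤ Real.log N / (-Real.log δ) := by
  have hden : 0 < -Real.log δ := neg_pos.mpr (Real.log_neg h0 h1)
  refine div_le_div_of_nonneg_right ?_ hden.le
  have hle : (coverNum F δ).toNat ≤ N := by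
    simpa using ENat.toNat_le_toNat hN (ENat.natCast_ne_top N)
  rcases Nat.eq_zero_or_pos (coverNum F δ).toNat with hzero | hpos
  · rw [hzero, Nat.cast_zero, Real.log_zero]
    exact Real.log_natCast_nonneg N
  · exact Real.log_le_log (by exact_mod_cast hpos) (by exact_mod_cast hle)

lemma lowerMinkDim_le_of_frequently (h : ∃ᶠ δ in 𝓝[>] 0, minkRatio F δ ≤ c) :
    lowerMinkDim F ≤ c :=
  liminf_le_of_frequently_le h (isBoundedUnder_of_eventually_ge eventually_minkRatio_nonneg)

-- The frequent upper bound keeps `minkRatio F` from tending to `∞`, where the real `liminf`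
-- would take a junk value.
lemma lowerMinkDim_nonneg_of_frequently (h : ∃ᶠ δ in 𝓝[>] 0, minkRatio F δ ≤ c) :
    0 ≤ lowerMinkDim F :=
  le_liminf_of_le (IsCoboundedUnder.of_frequently_le h) eventually_minkRatio_nonneg

lemma lowerMinkDim_eq_zero_of_frequently (h : ∀ ε > 0, ∃ᶠ δ in 𝓝[>] 0, minkRatio F δ ≤ ε) :
    lowerMinkDim F = 0 :=
  le_antisymm (le_of_forall_gt_imp_ge_of_dense fun _ hε => lowerMinkDim_le_of_frequently (h _ hε))
    (lowerMinkDim_nonneg_of_frequently (h 1 one_pos))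

lemma le_lowerMinkDim_of_tendsto {g : ℝ → ℝ} {a : ℝ} (h : ∃ᶠ δ in 𝓝[>] 0, minkRatio F δ ≤ c)
    (hg : Tendsto g (𝓝[>] 0) (𝓝 a)) (hgF : ∀ᶠ δ in 𝓝[>] 0, g δ ≤ minkRatio F δ) :
    a ≤ lowerMinkDim F := by
  refine le_of_forall_lt_imp_le_of_dense fun b hb => ?_
  refine le_liminf_of_le (IsCoboundedUnder.of_frequently_le h) ?_
  filter_upwards [hg.eventually (lt_mem_nhds hb), hgF] with δ hbg hgδ
  exact hbg.le.trans hgδ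

lemma tendsto_inv_two_pow_nhdsGT : Tendsto (fun n : ℕ => ((2 : ℝ) ^ n)⁻¹) atTop (𝓝[>] 0) := by
  simpa only [inv_pow] using tendsto_pow_atTop_nhdsWithin_zero_of_lt_one (r := (2 : ℝ)⁻¹)
    (by norm_num) (by norm_num)

lemma minkRatio_inv_two_pow_le {n m : ℕ} (hn : 0 < n)
    (hF : coverNum F ((2 ^ n)⁻¹) ≤ ((2 ^ m : ℕ) : ℕ∞)) :
    minkRatio F ((2 ^ n)⁻¹) ≤ m / n := by
  have hδ : ((2 : ℝ) ^ n)⁻¹ < 1 := inv_lt_one_of_one_lt₀ (one_lt_pow₀ one_lt_two hn.ne')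
  refine (minkRatio_le_of_coverNum_le (by positivity) hδ hF).trans_eq ?_
  have hlog2 : Real.log 2 ≠ 0 := (Real.log_pos one_lt_two).ne'
  rw [Real.log_inv, neg_neg, Nat.cast_pow, Real.log_pow, Real.log_pow, Nat.cast_ofNat]
  field_simp

end MinkRatio

lemma Real.ofDigits_add_of_forall_eq_zero_or {b : ℕ} [NeZero b] {d e : ℕ → Fin b}
    (h : ∀ i, d i = 0 ∨ e i = 0) : Real.ofDigits (d + e) = Real.ofDigits d + Real.ofDigits e := by
  rw [Real.ofDigits, Real.ofDigits, Real.ofDigits,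
    ← Real.summable_ofDigitsTerm.tsum_add Real.summable_ofDigitsTerm]
  congr 1 with i
  rcases h i with h | h <;> simp [Real.ofDigitsTerm, h]

def binaryDigitSet (S : Set ℕ) : Set ℝ :=
  Real.ofDigits '' {d : ℕ → Fin 2 | ∀ i ∉ S, d i = 0}

section BinaryDigitSet

variable (S : Set ℕ)

lemma binaryDigitSet_nonempty : (binaryDigitSet S).Nonempty :=
  ⟨_, 0, fun _ _ => rfl, rfl⟩

lemma binaryDigitSet_subset_Icc : binaryDigitSet S ⊆ Set.Icc 0 1 := by
  rintro _ ⟨d, -, rfl⟩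
  exact ⟨Real.ofDigits_nonneg d, Real.ofDigits_le_one d⟩

lemma isCompact_binaryDigitSet : IsCompact (binaryDigitSet S) := by
  have hclosed : IsClosed {d : ℕ → Fin 2 | ∀ i ∉ S, d i = 0} := by
    simp only [Set.ofPred_forall]
    exact isClosed_iInter fun i => isClosed_iInter fun _ =>
      isClosed_eq (continuous_apply i) continuous_const
  exact hclosed.isCompact.image Real.continuous_ofDigits

lemma binaryDigitSet_add_compl : binaryDigitSet S + binaryDigitSet Sᶜ = Set.Icc 0 1 := by
  classical
  refine subset_antisymm ?_ fun x hx => ?_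
  · rintro _ ⟨_, ⟨d, hd, rfl⟩, _, ⟨e, he, rfl⟩, rfl⟩
    have hde : ∀ i, d i = 0 ∨ e i = 0 := fun i => by
      by_cases hi : i ∈ S
      · exact Or.inr (he i (not_not.mpr hi))
      · exact Or.inl (hd i hi)
    show Real.ofDigits d + Real.ofDigits e ∈ _
    rw [← Real.ofDigits_add_of_forall_eq_zero_or hde]
    exact ⟨Real.ofDigits_nonneg _, Real.ofDigits_le_one _⟩
  · obtain ⟨d, -, rfl⟩ := Real.ofDigits_SurjOn one_lt_two hx
    let dS : ℕ → Fin 2 := fun i => if i ∈ S then d i else 0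
    let dSc : ℕ → Fin 2 := fun i => if i ∈ S then 0 else d i
    have hsplit : ∀ i, dS i = 0 ∨ dSc i = 0 := fun i => by
      by_cases hi : i ∈ S <;> simp [dS, dSc, hi]
    refine ⟨_, ⟨dS, fun i hi => if_neg hi, rfl⟩, _,
      ⟨dSc, fun i hi => if_pos (not_not.mp hi), rfl⟩, ?_⟩
    show Real.ofDigits dS + Real.ofDigits dSc = _
    rw [← Real.ofDigits_add_of_forall_eq_zero_or hsplit]
    congr 1 with i
    by_cases hi : i ∈ S <;> simp [dS, dSc, hi]

open Classical in
lemma exists_isCenteredCover_binaryDigitSet (n : ℕ) :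
    ∃ s : Finset ℝ, IsCenteredCover (binaryDigitSet S) s ((2 ^ n)⁻¹) ∧
      s.card ≤ 2 ^ Nat.count (· ∈ S) n := by
  let T := (Finset.range n).filter (· ∈ S)
  let center : Finset ℕ → ℝ := fun t => Real.ofDigits fun i => if i ∈ t then (1 : Fin 2) else 0
  refine ⟨T.powerset.image center, ⟨?_, ?_⟩, ?_⟩
  · intro x hx
    obtain ⟨t, ht, rfl⟩ := Finset.mem_image.mp hx
    refine ⟨_, fun i hi => ?_, rfl⟩
    have hit : i ∉ t := fun hit => by simpa [T, hi] using Finset.mem_powerset.mp ht hit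
    simp [hit]
  · rintro _ ⟨d, hd, rfl⟩
    let t := T.filter fun i => d i ≠ 0
    refine Set.mem_biUnion (Finset.mem_image_of_mem center
      (Finset.mem_powerset.mpr (Finset.filter_subset (fun i => d i ≠ 0) T))) ?_
    have hagree : ∀ i < n, d i = if i ∈ t then (1 : Fin 2) else 0 := fun i hi => by
      by_cases hdi : d i = 0
      · simp [t, hdi]
      · have hiS : i ∈ S := by_contra fun hiS => hdi (hd i hiS)
        have : d i = 1 := by omega
        simp [t, T, hi, hiS, this]
    rw [Metric.mem_closedBall, Real.dist_eq]
    simpa using Real.abs_ofDigits_sub_ofDigits_le hagree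
  · calc _ ≤ T.powerset.card := Finset.card_image_le
      _ = 2 ^ Nat.count (· ∈ S) n := by rw [Finset.card_powerset, Nat.count_eq_card_filter_range]

end BinaryDigitSet

section FactorialLevel

open scoped Nat

-- `factorialLevel i = k` exactly when `k ! ≤ i < (k + 1)!`, for `i ≥ 1`.
def factorialLevel (i : ℕ) : ℕ := Nat.findGreatest (fun k => k ! ≤ i) i

lemma factorialLevel_le_of_lt_factorial {i k : ℕ} (h : i < (k + 1)!) : factorialLevel i ≤ k := by
  by_contra! hk
  have hspec : (factorialLevel i)! ≤ i :=
    Nat.findGreatest_of_ne_zero (P := fun k => k ! ≤ i) rfl (by omega)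
  exact absurd ((Nat.factorial_le hk).trans hspec) (not_le.mpr h)

lemma lt_factorial_factorialLevel_succ (i : ℕ) : i < (factorialLevel i + 1)! := by
  by_cases h : factorialLevel i + 1 ≤ i
  · exact not_le.mp (Nat.findGreatest_is_greatest (P := fun k => k ! ≤ i) (Nat.lt_succ_self _) h)
  · exact (not_le.mp h).trans_le (Nat.self_le_factorial _)

open Classical in
lemma count_factorialLevel_le {p : ℕ → Prop} {k : ℕ} (hk : ¬ p k) :
    Nat.count (fun i => p (factorialLevel i)) (k + 1)! ≤ k ! := by
  rw [Nat.count_eq_card_filter_range]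
  refine (Finset.card_le_card fun i hi => ?_).trans (Finset.card_range k !).le
  obtain ⟨hi, hpi⟩ := Finset.mem_filter.mp hi
  have hle := factorialLevel_le_of_lt_factorial (Finset.mem_range.mp hi)
  have hne : factorialLevel i ≠ k := fun h => hk (h ▸ hpi)
  exact Finset.mem_range.mpr ((lt_factorial_factorialLevel_succ i).trans_le
    (Nat.factorial_le (by omega)))

end FactorialLevel

open Classical in
def HasLowerDensityZero (S : Set ℕ) : Prop :=
  ∀ ε > 0, ∃ᶠ n in atTop, (Nat.count (· ∈ S) n : ℝ) ≤ ε * n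

open scoped Nat Classical in
lemma hasLowerDensityZero_setOf_factorialLevel {p : ℕ → Prop} (hp : ∃ᶠ k in atTop, ¬ p k) :
    HasLowerDensityZero {i | p (factorialLevel i)} := by
  intro ε hε
  have hlarge : ∀ᶠ k : ℕ in atTop, 1 ≤ ε * (k + 1) := by
    obtain ⟨K, hK⟩ := exists_nat_gt ε⁻¹
    filter_upwards [eventually_ge_atTop K] with k hk
    rw [← div_le_iff₀' hε, one_div]
    exact hK.le.trans (by exact_mod_cast hk.trans k.le_succ)
  have hfact : Tendsto (fun k : ℕ => (k + 1)!) atTop atTop :=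
    tendsto_atTop_mono (fun k => Nat.self_le_factorial (k + 1)) (tendsto_add_atTop_nat 1)
  refine hfact.frequently ((hp.and_eventually hlarge).mono fun k ⟨hk, hεk⟩ => ?_)
  calc (Nat.count (· ∈ {i | p (factorialLevel i)}) (k + 1)! : ℝ) ≤ k ! := by
        exact_mod_cast count_factorialLevel_le hk
    _ ≤ ε * (k + 1) * k ! := le_mul_of_one_le_left (by positivity) hεk
    _ = ε * ((k + 1)! : ℕ) := by push_cast [Nat.factorial_succ]; ring

open Classical in
lemma lowerMinkDim_binaryDigitSet_eq_zero {S : Set ℕ} (hS : HasLowerDensityZero S) :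
    lowerMinkDim (binaryDigitSet S) = 0 := by
  refine lowerMinkDim_eq_zero_of_frequently fun ε hε => tendsto_inv_two_pow_nhdsGT.frequently
    (((hS ε hε).and_eventually (eventually_gt_atTop 0)).mono fun n ⟨hcount, hn⟩ => ?_)
  obtain ⟨s, hs, hcard⟩ := exists_isCenteredCover_binaryDigitSet S n
  have hcov : coverNum (binaryDigitSet S) ((2 ^ n)⁻¹) ≤ ((2 ^ Nat.count (· ∈ S) n : ℕ) : ℕ∞) :=
    (coverNum_le_card hs).trans (by exact_mod_cast hcard)
  refine (minkRatio_inv_two_pow_le hn hcov).trans ?_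
  rwa [div_le_iff₀ (by positivity)]

open Classical in
lemma frequently_minkRatio_euclideanProd_binaryDigitSet_le (S T : Set ℕ) :
    ∃ᶠ δ in 𝓝[>] 0, minkRatio (euclideanProd (binaryDigitSet S) (binaryDigitSet T)) δ ≤ 4 := by
  refine tendsto_inv_two_pow_nhdsGT.frequently
    ((eventually_gt_atTop 0).frequently.mono fun n hn => ?_)
  obtain ⟨s, hs, hs_card⟩ := exists_isCenteredCover_binaryDigitSet S (n + 1)
  obtain ⟨t, ht, ht_card⟩ := exists_isCenteredCover_binaryDigitSet T (n + 1)
  have hcov : coverNum (euclideanProd (binaryDigitSet S) (binaryDigitSet T)) ((2 ^ n)⁻¹) ≤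
      ((2 ^ (2 * (n + 1)) : ℕ) : ℕ∞) := by
    have hscale : (2 : ℝ) * (2 ^ (n + 1))⁻¹ = (2 ^ n)⁻¹ := by
      rw [pow_succ]; field_simp
    rw [← hscale]
    refine (coverNum_euclideanProd_le (by positivity) hs ht).trans ?_
    have hcount : ∀ U : Set ℕ, 2 ^ Nat.count (· ∈ U) (n + 1) ≤ 2 ^ (n + 1) :=
      fun _ => Nat.pow_le_pow_right two_pos (Nat.count_le _)
    calc ((s.card * t.card : ℕ) : ℕ∞) ≤ ((2 ^ (n + 1) * 2 ^ (n + 1) : ℕ) : ℕ∞) := by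
          exact_mod_cast Nat.mul_le_mul (hs_card.trans (hcount S)) (ht_card.trans (hcount T))
      _ = ((2 ^ (2 * (n + 1)) : ℕ) : ℕ∞) := by ring_nf
  refine (minkRatio_inv_two_pow_le hn hcov).trans ?_
  have hn1 : (1 : ℝ) ≤ n := by exact_mod_cast hn
  rw [div_le_iff₀ (by positivity)]
  push_cast
  linarith

section SumsetIcc

variable {F G : Set ℝ}

lemma one_le_toNat_coverNum_euclideanProd_mul (hF : IsCompact F) (hG : IsCompact G)
    (hFG : F + G = Set.Icc 0 1) {δ : ℝ} (hδ : 0 < δ) :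
    1 ≤ ((coverNum (euclideanProd F G) δ).toNat : ℝ) * (4 * δ) := by
  have hle : (coverNum (Set.Icc (0 : ℝ) 1) (2 * δ)).toNat ≤
      (coverNum (euclideanProd F G) δ).toNat :=
    ENat.toNat_le_toNat (hFG ▸ coverNum_le_coverNum_euclideanProd)
      ((isCompact_euclideanProd hF hG).coverNum_ne_top hδ)
  calc (1 : ℝ) ≤ (coverNum (Set.Icc (0 : ℝ) 1) (2 * δ)).toNat * (2 * (2 * δ)) :=
        one_le_coverNum_Icc_mul (by positivity)
    _ ≤ (coverNum (euclideanProd F G) δ).toNat * (2 * (2 * δ)) := by gcongr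
    _ = _ := by ring

lemma one_sub_le_minkRatio_euclideanProd (hF : IsCompact F) (hG : IsCompact G)
    (hFG : F + G = Set.Icc 0 1) {δ : ℝ} (h0 : 0 < δ) (h1 : δ < 1) :
    1 - Real.log 4 / (-Real.log δ) ≤ minkRatio (euclideanProd F G) δ := by
  have hden : 0 < -Real.log δ := neg_pos.mpr (Real.log_neg h0 h1)
  have hN := one_le_toNat_coverNum_euclideanProd_mul hF hG hFG h0
  have hlog : -Real.log δ - Real.log 4 ≤ Real.log ((coverNum (euclideanProd F G) δ).toNat) :=
    calc -Real.log δ - Real.log 4 = Real.log (4 * δ)⁻¹ := by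
          rw [Real.log_inv, Real.log_mul (by norm_num) h0.ne']; ring
      _ ≤ _ := Real.log_le_log (by positivity) ((inv_le_iff_one_le_mul₀ (by positivity)).mpr hN)
  rw [one_sub_div hden.ne']
  exact div_le_div_of_nonneg_right hlog hden.le

lemma one_le_lowerMinkDim_euclideanProd (hF : IsCompact F) (hG : IsCompact G)
    (hFG : F + G = Set.Icc 0 1) {c : ℝ}
    (h : ∃ᶠ δ in 𝓝[>] 0, minkRatio (euclideanProd F G) δ ≤ c) :
    1 ≤ lowerMinkDim (euclideanProd F G) := by
  refine le_lowerMinkDim_of_tendsto h (g := fun δ => 1 - Real.log 4 / (-Real.log δ)) ?_ ?_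
  · simpa using tendsto_const_nhds.sub (tendsto_const_nhds.div_atTop
      (tendsto_neg_atTop_iff.mpr Real.tendsto_log_nhdsGT_zero))
  · filter_upwards [Ioo_mem_nhdsGT (zero_lt_one' ℝ)] with δ hδ
    exact one_sub_le_minkRatio_euclideanProd hF hG hFG hδ.1 hδ.2

end SumsetIcc

/-- There exist nonempty compact sets `F, G ⊆ [0,1]` of lower Minkowski dimension zero whose
sumset is all of `[0,1]`, so that the Cartesian product `F × G ⊆ ℝ²` (Euclidean metric) has
lower Minkowski dimension at least 1. -/
theorem stmt15 :
    ∃ F G : Set ℝ, F.Nonempty ∧ G.Nonempty ∧ IsCompact F ∧ IsCompact G ∧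
      F ⊆ Set.Icc 0 1 ∧ G ⊆ Set.Icc 0 1 ∧
      lowerMinkDim F = 0 ∧ lowerMinkDim G = 0 ∧
      F + G = Set.Icc 0 1 ∧
      1 ≤ lowerMinkDim {p : EuclideanSpace ℝ (Fin 2) | p 0 ∈ F ∧ p 1 ∈ G} := by
  let E : Set ℕ := {i | Even (factorialLevel i)}
  have hE : HasLowerDensityZero E := hasLowerDensityZero_setOf_factorialLevel <|
    frequently_atTop.mpr fun a => ⟨2 * a + 1, by omega, by simp⟩
  have hEc : HasLowerDensityZero Eᶜ := hasLowerDensityZero_setOf_factorialLevel (p := (¬ Even ·)) <|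
    frequently_atTop.mpr fun a => ⟨2 * a, by omega, by simp⟩
  exact ⟨binaryDigitSet E, binaryDigitSet Eᶜ, binaryDigitSet_nonempty E,
    binaryDigitSet_nonempty Eᶜ, isCompact_binaryDigitSet E, isCompact_binaryDigitSet Eᶜ,
    binaryDigitSet_subset_Icc E, binaryDigitSet_subset_Icc Eᶜ,
    lowerMinkDim_binaryDigitSet_eq_zero hE, lowerMinkDim_binaryDigitSet_eq_zero hEc,
    binaryDigitSet_add_compl E,
    one_le_lowerMinkDim_euclideanProd (isCompact_binaryDigitSet E) (isCompact_binaryDigitSet Eᶜ)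
      (binaryDigitSet_add_compl E) (frequently_minkRatio_euclideanProd_binaryDigitSet_le E Eᶜ)⟩
end

section
/- Let ρ and σ be density matrices (positive semidefinite complex d×d matrices of trace 1). Then ½‖ρ−σ‖₁ ≤ p(ρ,σ) ≤ ‖√ρ − √σ‖₂ ≤ √2 · p(ρ,σ) ≤ √2 · √(‖ρ−σ‖₁). -/
/-!
Write `t = Re Tr(√ρ√σ)` and `F = ‖√ρ√σ‖₁`. Expanding the square gives `‖√ρ - √σ‖₂² = 2 - 2t`,
so the chain reduces to `F² ≤ t ≤ F`, the Powers–Størmer inequality `‖√ρ - √σ‖₂² ≤ ‖ρ - σ‖₁` and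
the Fuchs–van de Graaf inequality `½‖ρ - σ‖₁ ≤ √(1 - F²)`.

Every trace-norm estimate comes from a polar decomposition `M = Kᴴ|M|` with a contraction `K`:
it gives `‖M‖₁ = Tr(M K)` and `Re Tr(M C) ≤ ‖M‖₁` for every contraction `C`, and such traces are
bounded by Cauchy–Schwarz for the Hilbert–Schmidt inner product (for `F² ≤ t`, after splitting
`√ρ` and `√σ` into fourth roots). Powers–Størmer tests `ρ - σ` against the sign of `√ρ - √σ`.
For Fuchs–van de Graaf, measure with the projection `P` onto the positive part of `ρ - σ`: the
outcome probabilities `p = Tr ρP`, `q = Tr σP` satisfy `p - q = ½‖ρ - σ‖₁`, while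
`F ≤ √(pq) + √((1-p)(1-q))`.
-/

open scoped ComplexOrder

noncomputable def Matrix.PosSemidef.sqrt {n 𝕜 : Type*} [Fintype n] [DecidableEq n] [RCLike 𝕜]
    {A : Matrix n n 𝕜} (hA : A.PosSemidef) : Matrix n n 𝕜 :=
  hA.1.eigenvectorUnitary.1 * Matrix.diagonal ((↑) ∘ (√·) ∘ hA.1.eigenvalues) *
  (star hA.1.eigenvectorUnitary : Matrix n n 𝕜)

namespace QDI

noncomputable def traceNorm {d : ℕ} (A : Matrix (Fin d) (Fin d) ℂ) : ℝ :=
  ((Matrix.posSemidef_conjTranspose_mul_self A).sqrt).trace.re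

noncomputable def hsNorm {d : ℕ} (A : Matrix (Fin d) (Fin d) ℂ) : ℝ :=
  Real.sqrt ((A.conjTranspose * A).trace.re)

/-- Equals `Tr √(√ρ σ √ρ)`: `(√ρ√σ)ᴴ(√ρ√σ) = √σ ρ √σ` and `√ρ σ √ρ` share their nonzero spectrum. -/
noncomputable def fid {d : ℕ} {ρ σ : Matrix (Fin d) (Fin d) ℂ}
    (hρ : ρ.PosSemidef) (hσ : σ.PosSemidef) : ℝ :=
  traceNorm (hρ.sqrt * hσ.sqrt)

end QDI

open QDI Matrix
open scoped MatrixOrder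

lemma Matrix.PosSemidef.sqrt_eq_cfcSqrt {n 𝕜 : Type*} [Fintype n] [DecidableEq n] [RCLike 𝕜]
    {A : Matrix n n 𝕜} (hA : A.PosSemidef) : hA.sqrt = CFC.sqrt A := by
  rw [CFC.sqrt_eq_real_sqrt A hA.nonneg, cfcₙ_eq_cfc, hA.1.cfc_eq]
  rfl

namespace Matrix

variable {n : Type*} [Fintype n]

lemma re_trace_nonneg {A : Matrix n n ℂ} (hA : 0 ≤ A) : 0 ≤ A.trace.re :=
  (Complex.nonneg_iff.mp (nonneg_iff_posSemidef.mp hA).trace_nonneg).1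

variable [DecidableEq n]

lemma re_trace_mul_nonneg {A B : Matrix n n ℂ} (hA : 0 ≤ A) (hB : 0 ≤ B) :
    0 ≤ (A * B).trace.re := by
  have hS : (CFC.sqrt A)ᴴ = CFC.sqrt A := (CFC.sqrt_nonneg A).isSelfAdjoint
  have key : (A * B).trace = (CFC.sqrt A * B * (CFC.sqrt A)ᴴ).trace := by
    rw [hS, trace_mul_cycle, CFC.sqrt_mul_sqrt_self A]
  rw [key]
  exact re_trace_nonneg ((nonneg_iff_posSemidef.mp hB).mul_mul_conjTranspose_same _).nonneg

lemma re_trace_mul_le_re_trace_mul {A B C : Matrix n n ℂ} (hA : 0 ≤ A) (hBC : B ≤ C) :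
    (A * B).trace.re ≤ (A * C).trace.re := by
  have := re_trace_mul_nonneg hA (sub_nonneg.mpr hBC)
  rwa [mul_sub, trace_sub, Complex.sub_re, sub_nonneg] at this

end Matrix

namespace QDI

variable {d : ℕ}

lemma hsNorm_sq (A : Matrix (Fin d) (Fin d) ℂ) : hsNorm A ^ 2 = (Aᴴ * A).trace.re :=
  Real.sq_sqrt (re_trace_nonneg (posSemidef_conjTranspose_mul_self A).nonneg)

lemma hsNorm_conjTranspose (A : Matrix (Fin d) (Fin d) ℂ) : hsNorm Aᴴ = hsNorm A := by
  rw [hsNorm, hsNorm, conjTranspose_conjTranspose, trace_mul_comm]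

lemma re_trace_conjTranspose_mul_le (A B : Matrix (Fin d) (Fin d) ℂ) :
    (Aᴴ * B).trace.re ≤ hsNorm A * hsNorm B := by
  let vec : Matrix (Fin d) (Fin d) ℂ → EuclideanSpace ℂ (Fin d × Fin d) :=
    fun M => WithLp.toLp 2 fun p => M p.2 p.1
  have hinner (M N : Matrix (Fin d) (Fin d) ℂ) : (Mᴴ * N).trace = inner ℂ (vec M) (vec N) := by
    simp [trace, mul_apply, PiLp.inner_apply, Fintype.sum_prod_type, mul_comm, vec]
  have hnorm (M : Matrix (Fin d) (Fin d) ℂ) : ‖vec M‖ = hsNorm M := by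
    rw [hsNorm, hinner, ← Real.sqrt_sq (norm_nonneg (vec M))]
    exact congrArg Real.sqrt (norm_sq_eq_re_inner (𝕜 := ℂ) _)
  rw [hinner, ← hnorm, ← hnorm]
  exact (Complex.re_le_norm _).trans (norm_inner_le_norm _ _)

lemma hsNorm_mul_le_of_contraction {K : Matrix (Fin d) (Fin d) ℂ} (hK : K * Kᴴ ≤ 1)
    (Z : Matrix (Fin d) (Fin d) ℂ) : hsNorm (Z * K) ≤ hsNorm Z := by
  refine Real.sqrt_le_sqrt ?_
  have htr : ((Z * K)ᴴ * (Z * K)).trace = (Zᴴ * Z * (K * Kᴴ)).trace := by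
    rw [conjTranspose_mul, mul_assoc, trace_mul_comm, ← mul_assoc, ← mul_assoc, mul_assoc]
  rw [htr]
  simpa using re_trace_mul_le_re_trace_mul (posSemidef_conjTranspose_mul_self Z).nonneg hK

lemma hsNorm_conjTranspose_mul_le_of_contraction {K : Matrix (Fin d) (Fin d) ℂ}
    (hK : K * Kᴴ ≤ 1) (Z : Matrix (Fin d) (Fin d) ℂ) : hsNorm (Kᴴ * Z) ≤ hsNorm Z := by
  rw [← hsNorm_conjTranspose, conjTranspose_mul, conjTranspose_conjTranspose,
    ← hsNorm_conjTranspose Z]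
  exact hsNorm_mul_le_of_contraction hK _

lemma re_trace_mul_mul_le_of_contraction {K : Matrix (Fin d) (Fin d) ℂ} (hK : K * Kᴴ ≤ 1)
    (X Y : Matrix (Fin d) (Fin d) ℂ) : (X * K * Y).trace.re ≤ hsNorm X * hsNorm Y := by
  have h := re_trace_conjTranspose_mul_le (Kᴴ * Xᴴ) Y
  rw [conjTranspose_mul, conjTranspose_conjTranspose, conjTranspose_conjTranspose] at h
  exact h.trans (mul_le_mul_of_nonneg_right
    ((hsNorm_conjTranspose_mul_le_of_contraction hK _).trans_eq (hsNorm_conjTranspose X))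
    (Real.sqrt_nonneg _))

lemma traceNorm_eq_re_trace_abs (M : Matrix (Fin d) (Fin d) ℂ) :
    traceNorm M = (CFC.abs M).trace.re := by
  rw [traceNorm, PosSemidef.sqrt_eq_cfcSqrt]
  rfl

lemma traceNorm_nonneg (M : Matrix (Fin d) (Fin d) ℂ) : 0 ≤ traceNorm M :=
  traceNorm_eq_re_trace_abs M ▸ re_trace_nonneg (CFC.abs_nonneg M)

lemma exists_contraction_eq_conjTranspose_mul_abs (M : Matrix (Fin d) (Fin d) ℂ) :
    ∃ K : Matrix (Fin d) (Fin d) ℂ,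
      K * Kᴴ ≤ 1 ∧ M = Kᴴ * CFC.abs M ∧ (M * K).trace = (CFC.abs M).trace := by
  set S := CFC.abs M
  have hSH : Sᴴ = S := (CFC.abs_nonneg M).isSelfAdjoint
  have hSS : Mᴴ * M = S * S := (CFC.abs_mul_abs M).symm
  have hc (f : ℝ → ℝ) : ContinuousOn f (spectrum ℝ S) := S.finite_real_spectrum.continuousOn f
  -- `W` inverts `S` on its range and vanishes on its kernel, since `0⁻¹ = 0`.
  set W := cfc (·⁻¹ : ℝ → ℝ) S
  have hWH : Wᴴ = W := IsSelfAdjoint.cfc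
  set E := W * S
  have hE : E = cfc (fun x : ℝ => x⁻¹ * x) S := by
    rw [cfc_mul _ _ S (hc _) (hc _), cfc_id' ℝ S]
  have hEH : Eᴴ = E := hE ▸ IsSelfAdjoint.cfc
  have hSW : S * W = E := by rw [← hEH, conjTranspose_mul, hSH, hWH]
  have hES : E * S = S := by
    have h := cfc_mul (fun x : ℝ => x⁻¹ * x) (fun x => x) S (hc _) (hc _)
    simp only [inv_mul_mul_self, cfc_id' ℝ S] at h
    rw [hE, ← h]
  have hSE : S * E = S := by rw [← hEH, ← hSH, ← conjTranspose_mul, hES]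
  refine ⟨W * Mᴴ, ?_, ?_, ?_⟩
  · calc W * Mᴴ * (W * Mᴴ)ᴴ = W * (Mᴴ * M) * W := by
          rw [conjTranspose_mul, conjTranspose_conjTranspose, hWH]; noncomm_ring
    _ = E := by rw [hSS, ← mul_assoc, show W * S * S = E * S from rfl, hES, hSW]
    _ ≤ 1 := hE ▸ cfc_le_one _ _ fun x _ => inv_mul_le_one
  · have hME : (M - M * E)ᴴ * (M - M * E) = 0 := by
      calc (M - M * E)ᴴ * (M - M * E) = (1 - E) * (Mᴴ * M) * (1 - E) := by
            rw [conjTranspose_sub, conjTranspose_mul, hEH]; noncomm_ring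
      _ = (S - S * E)ᴴ * (S - S * E) := by
            rw [hSS, conjTranspose_sub, conjTranspose_mul, hEH, hSH]; noncomm_ring
      _ = 0 := by rw [hSE, sub_self, mul_zero]
    rw [conjTranspose_mul, conjTranspose_conjTranspose, hWH, mul_assoc]
    exact sub_eq_zero.mp (conjTranspose_mul_self_eq_zero.mp hME)
  · rw [← mul_assoc, trace_mul_comm, ← mul_assoc, hSS, mul_assoc, hSW, hSE]

lemma re_trace_mul_le_traceNorm_of_contraction (M : Matrix (Fin d) (Fin d) ℂ)
    {C : Matrix (Fin d) (Fin d) ℂ} (hC : C * Cᴴ ≤ 1) : (M * C).trace.re ≤ traceNorm M := by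
  obtain ⟨K, -, hM, htr⟩ := exists_contraction_eq_conjTranspose_mul_abs M
  set S := CFC.abs M
  set R := CFC.sqrt S
  have hRH : Rᴴ = R := (CFC.sqrt_nonneg S).isSelfAdjoint
  have hRR : R * R = S := CFC.sqrt_mul_sqrt_self S (CFC.abs_nonneg M)
  have hRK : hsNorm (R * K) ^ 2 = traceNorm M := by
    rw [hsNorm_sq, conjTranspose_mul, hRH, traceNorm_eq_re_trace_abs, ← htr,
      show Kᴴ * R * (R * K) = Kᴴ * (R * R) * K by noncomm_ring, hRR, ← hM]
  have hRC : hsNorm (R * C) ^ 2 ≤ traceNorm M := by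
    rw [hsNorm_sq, conjTranspose_mul, hRH, traceNorm_eq_re_trace_abs,
      show Cᴴ * R * (R * C) = Cᴴ * (R * R * C) by noncomm_ring, hRR, trace_mul_comm, mul_assoc]
    simpa using re_trace_mul_le_re_trace_mul (CFC.abs_nonneg M) hC
  have hMC : M * C = (R * K)ᴴ * (R * C) := by
    rw [conjTranspose_mul, hRH, hM, show Kᴴ * R * (R * C) = Kᴴ * (R * R) * C by noncomm_ring,
      hRR]
  calc (M * C).trace.re ≤ hsNorm (R * K) * hsNorm (R * C) := hMC ▸ re_trace_conjTranspose_mul_le _ _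
  _ ≤ traceNorm M := by nlinarith [sq_nonneg (hsNorm (R * K) - hsNorm (R * C))]

lemma re_trace_le_traceNorm (M : Matrix (Fin d) (Fin d) ℂ) : M.trace.re ≤ traceNorm M := by
  simpa using re_trace_mul_le_traceNorm_of_contraction M (C := 1) (by simp)

lemma hsNorm_sqrt {A : Matrix (Fin d) (Fin d) ℂ} (hA : 0 ≤ A) :
    hsNorm (CFC.sqrt A) = √A.trace.re := by
  have hH : (CFC.sqrt A)ᴴ = CFC.sqrt A := (CFC.sqrt_nonneg A).isSelfAdjoint
  rw [hsNorm, hH, CFC.sqrt_mul_sqrt_self A]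

lemma hsNorm_sqrt_sub_sqrt_sq {ρ σ : Matrix (Fin d) (Fin d) ℂ} (hρ : 0 ≤ ρ) (hρ1 : ρ.trace = 1)
    (hσ : 0 ≤ σ) (hσ1 : σ.trace = 1) :
    hsNorm (CFC.sqrt ρ - CFC.sqrt σ) ^ 2 = 2 - 2 * (CFC.sqrt ρ * CFC.sqrt σ).trace.re := by
  have hρH : (CFC.sqrt ρ)ᴴ = CFC.sqrt ρ := (CFC.sqrt_nonneg ρ).isSelfAdjoint
  have hσH : (CFC.sqrt σ)ᴴ = CFC.sqrt σ := (CFC.sqrt_nonneg σ).isSelfAdjoint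
  have hexp : (CFC.sqrt ρ - CFC.sqrt σ)ᴴ * (CFC.sqrt ρ - CFC.sqrt σ) =
      CFC.sqrt ρ * CFC.sqrt ρ + CFC.sqrt σ * CFC.sqrt σ
        - CFC.sqrt ρ * CFC.sqrt σ - CFC.sqrt σ * CFC.sqrt ρ := by
    rw [conjTranspose_sub, hρH, hσH]; noncomm_ring
  rw [hsNorm_sq, hexp, CFC.sqrt_mul_sqrt_self ρ, CFC.sqrt_mul_sqrt_self σ, trace_sub, trace_sub,
    trace_add, hρ1, hσ1, trace_mul_comm (CFC.sqrt σ)]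
  simp only [Complex.sub_re, Complex.add_re, Complex.one_re]
  ring

lemma traceNorm_sqrt_mul_sqrt_sq_le {ρ σ : Matrix (Fin d) (Fin d) ℂ} (hρ : 0 ≤ ρ)
    (hρ1 : ρ.trace = 1) (hσ : 0 ≤ σ) (hσ1 : σ.trace = 1) :
    traceNorm (CFC.sqrt ρ * CFC.sqrt σ) ^ 2 ≤ (CFC.sqrt ρ * CFC.sqrt σ).trace.re := by
  obtain ⟨K, hK, -, htr⟩ := exists_contraction_eq_conjTranspose_mul_abs (CFC.sqrt ρ * CFC.sqrt σ)
  set a := CFC.sqrt (CFC.sqrt ρ)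
  set b := CFC.sqrt (CFC.sqrt σ)
  have haH : aᴴ = a := (CFC.sqrt_nonneg _).isSelfAdjoint
  have hbH : bᴴ = b := (CFC.sqrt_nonneg _).isSelfAdjoint
  have haa : a * a = CFC.sqrt ρ := CFC.sqrt_mul_sqrt_self _ (CFC.sqrt_nonneg ρ)
  have hbb : b * b = CFC.sqrt σ := CFC.sqrt_mul_sqrt_self _ (CFC.sqrt_nonneg σ)
  have hF : traceNorm (CFC.sqrt ρ * CFC.sqrt σ) ≤ hsNorm (b * a) * hsNorm (b * K * a) := by
    rw [traceNorm_eq_re_trace_abs, ← htr, ← haa, ← hbb,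
      show a * a * (b * b) * K = a * (a * b * (b * K)) by noncomm_ring, trace_mul_comm,
      show a * b * (b * K) * a = (b * a)ᴴ * (b * K * a) by
        rw [conjTranspose_mul, haH, hbH]; noncomm_ring]
    exact re_trace_conjTranspose_mul_le _ _
  have hba : hsNorm (b * a) ^ 2 = (CFC.sqrt ρ * CFC.sqrt σ).trace.re := by
    rw [hsNorm_sq, conjTranspose_mul, haH, hbH, ← haa, ← hbb,
      show a * b * (b * a) = a * (b * b * a) by noncomm_ring, trace_mul_comm, mul_assoc,
      trace_mul_comm]
  have hbKa : hsNorm (b * K * a) ^ 2 ≤ 1 := by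
    have hρn : hsNorm (CFC.sqrt ρ) = 1 := by simp [hsNorm_sqrt hρ, hρ1]
    have hσn : hsNorm (CFC.sqrt σ) = 1 := by simp [hsNorm_sqrt hσ, hσ1]
    rw [hsNorm_sq, conjTranspose_mul, conjTranspose_mul, haH, hbH,
      show a * (Kᴴ * b) * (b * K * a) = a * (Kᴴ * (b * b) * K * a) by noncomm_ring,
      trace_mul_comm, show Kᴴ * (b * b) * K * a * a = Kᴴ * (b * b) * K * (a * a) by noncomm_ring,
      haa, hbb]
    calc _ ≤ hsNorm (Kᴴ * CFC.sqrt σ) * hsNorm (CFC.sqrt ρ) :=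
          re_trace_mul_mul_le_of_contraction hK _ _
    _ ≤ 1 := by
        rw [hρn, mul_one, ← hσn]
        exact hsNorm_conjTranspose_mul_le_of_contraction hK _
  calc traceNorm (CFC.sqrt ρ * CFC.sqrt σ) ^ 2 ≤ (hsNorm (b * a) * hsNorm (b * K * a)) ^ 2 :=
        pow_le_pow_left₀ (traceNorm_nonneg _) hF 2
  _ = hsNorm (b * a) ^ 2 * hsNorm (b * K * a) ^ 2 := mul_pow _ _ _
  _ ≤ (CFC.sqrt ρ * CFC.sqrt σ).trace.re := by
      rw [hba]
      exact mul_le_of_le_one_right (hba ▸ sq_nonneg _) hbKa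

lemma exists_contraction_mul_eq_abs {X : Matrix (Fin d) (Fin d) ℂ} (hX : IsSelfAdjoint X) :
    ∃ C : Matrix (Fin d) (Fin d) ℂ, C * Cᴴ ≤ 1 ∧ C * X = CFC.abs X ∧ X * C = CFC.abs X := by
  have hc (f : ℝ → ℝ) : ContinuousOn f (spectrum ℝ X) := X.finite_real_spectrum.continuousOn f
  set C := cfc (fun x : ℝ => if 0 ≤ x then 1 else -1) X
  have hCH : Cᴴ = C := IsSelfAdjoint.cfc
  have hCX : C * X = CFC.abs X := by
    calc C * X = cfc (fun x : ℝ => (if 0 ≤ x then 1 else -1) * x) X := by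
          rw [cfc_mul _ _ X (hc _) (hc _), cfc_id' ℝ X]
    _ = cfc (‖·‖) X := cfc_congr fun x _ => by
          split_ifs with h <;> simp [Real.norm_eq_abs, abs_of_nonneg, abs_of_neg, not_le.mp, h]
    _ = CFC.abs X := (CFC.abs_eq_cfc_norm X hX).symm
  refine ⟨C, le_of_eq ?_, hCX, ?_⟩
  · calc C * Cᴴ = cfc (fun x : ℝ => (if 0 ≤ x then 1 else -1) * (if 0 ≤ x then 1 else -1)) X := by
          rw [hCH, cfc_mul _ _ X (hc _) (hc _)]
    _ = 1 := (cfc_congr fun x _ => by split_ifs <;> norm_num).trans (cfc_const_one ℝ X)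
  · have hXH : Xᴴ = X := hX
    rw [← (CFC.abs_nonneg X).isSelfAdjoint.star_eq, ← hCX, star_eq_conjTranspose, conjTranspose_mul,
      hCH, hXH]

lemma hsNorm_sqrt_sub_sqrt_sq_le_traceNorm {A B : Matrix (Fin d) (Fin d) ℂ} (hA : 0 ≤ A)
    (hB : 0 ≤ B) : hsNorm (CFC.sqrt A - CFC.sqrt B) ^ 2 ≤ traceNorm (A - B) := by
  set X := CFC.sqrt A - CFC.sqrt B with hXdef
  set Y := CFC.sqrt A + CFC.sqrt B with hYdef
  have hX : IsSelfAdjoint X :=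
    (CFC.sqrt_nonneg A).isSelfAdjoint.sub (CFC.sqrt_nonneg B).isSelfAdjoint
  obtain ⟨C, hC, hCX, hXC⟩ := exists_contraction_mul_eq_abs hX
  have htr : ((A - B) * C).trace = (Y * CFC.abs X).trace := by
    have hsum : (A - B) + (A - B) = X * Y + Y * X := by
      calc (A - B) + (A - B) = (CFC.sqrt A * CFC.sqrt A - CFC.sqrt B * CFC.sqrt B)
            + (CFC.sqrt A * CFC.sqrt A - CFC.sqrt B * CFC.sqrt B) := by
            rw [CFC.sqrt_mul_sqrt_self A, CFC.sqrt_mul_sqrt_self B]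
      _ = X * Y + Y * X := by rw [hXdef, hYdef]; noncomm_ring
    have h := congrArg (fun M => (M * C).trace) hsum
    simp only [add_mul, trace_add] at h
    rw [mul_assoc X, trace_mul_comm X, mul_assoc, hCX, mul_assoc Y, hXC] at h
    linear_combination h / 2
  have hdec : Y * CFC.abs X - Xᴴ * X
      = CFC.sqrt A * (CFC.abs X - X) + CFC.sqrt B * (CFC.abs X + X) := by
    rw [show Xᴴ = X from hX, hXdef, hYdef]
    noncomm_ring
  have hsub : 0 ≤ CFC.abs X - X := by
    rw [CFC.abs_sub_self X hX]
    exact nsmul_nonneg (CFC.negPart_nonneg X) 2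
  have hadd : 0 ≤ CFC.abs X + X := by
    rw [CFC.abs_add_self X hX]
    exact nsmul_nonneg (CFC.posPart_nonneg X) 2
  have hpos := add_nonneg (re_trace_mul_nonneg (CFC.sqrt_nonneg A) hsub)
    (re_trace_mul_nonneg (CFC.sqrt_nonneg B) hadd)
  rw [← Complex.add_re, ← trace_add, ← hdec, trace_sub, Complex.sub_re, sub_nonneg, ← htr] at hpos
  rw [hsNorm_sq]
  exact hpos.trans (re_trace_mul_le_traceNorm_of_contraction _ hC)

lemma re_trace_sqrt_mul_mul_sqrt_mul_le {A B K Q : Matrix (Fin d) (Fin d) ℂ} (hA : 0 ≤ A)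
    (hB : 0 ≤ B) (hK : K * Kᴴ ≤ 1) (hQ : 0 ≤ Q) :
    (CFC.sqrt B * K * CFC.sqrt A * Q).trace.re ≤ √(B * Q).trace.re * √(A * Q).trace.re := by
  set q := CFC.sqrt Q
  have hqH : qᴴ = q := (CFC.sqrt_nonneg Q).isSelfAdjoint
  have hAH : (CFC.sqrt A)ᴴ = CFC.sqrt A := (CFC.sqrt_nonneg A).isSelfAdjoint
  have hBH : (CFC.sqrt B)ᴴ = CFC.sqrt B := (CFC.sqrt_nonneg B).isSelfAdjoint
  have htr : (CFC.sqrt B * K * CFC.sqrt A * Q).trace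
      = (q * CFC.sqrt B * K * (CFC.sqrt A * q)).trace := by
    rw [← CFC.sqrt_mul_sqrt_self Q, ← mul_assoc, trace_mul_comm]
    simp only [q, mul_assoc]
  have hX : hsNorm (q * CFC.sqrt B) = √(B * Q).trace.re := by
    rw [hsNorm, conjTranspose_mul, hqH, hBH,
      show CFC.sqrt B * q * (q * CFC.sqrt B) = CFC.sqrt B * (q * q * CFC.sqrt B) by noncomm_ring,
      trace_mul_comm, mul_assoc, CFC.sqrt_mul_sqrt_self B, CFC.sqrt_mul_sqrt_self Q,
      trace_mul_comm]
  have hY : hsNorm (CFC.sqrt A * q) = √(A * Q).trace.re := by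
    rw [hsNorm, conjTranspose_mul, hqH, hAH,
      show q * CFC.sqrt A * (CFC.sqrt A * q) = q * (CFC.sqrt A * CFC.sqrt A * q) by noncomm_ring,
      trace_mul_comm, mul_assoc, CFC.sqrt_mul_sqrt_self A, CFC.sqrt_mul_sqrt_self Q]
  rw [htr, ← hX, ← hY]
  exact re_trace_mul_mul_le_of_contraction hK _ _

lemma exists_two_mul_re_trace_mul_eq_traceNorm_add {X : Matrix (Fin d) (Fin d) ℂ}
    (hX : IsSelfAdjoint X) :
    ∃ P : Matrix (Fin d) (Fin d) ℂ,
      0 ≤ P ∧ P ≤ 1 ∧ 2 * (X * P).trace.re = traceNorm X + X.trace.re := by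
  have hc (f : ℝ → ℝ) : ContinuousOn f (spectrum ℝ X) := X.finite_real_spectrum.continuousOn f
  refine ⟨cfc (fun x : ℝ => if 0 ≤ x then 1 else 0) X, cfc_nonneg fun x _ => ?_,
    cfc_le_one _ _ fun x _ => ?_, ?_⟩
  · split_ifs <;> norm_num
  · split_ifs <;> norm_num
  have hXP : X * cfc (fun x : ℝ => if 0 ≤ x then 1 else 0) X = X⁺ := by
    calc X * cfc (fun x : ℝ => if 0 ≤ x then 1 else 0) X
        = cfc (fun x : ℝ => x * if 0 ≤ x then 1 else 0) X := by
          rw [cfc_mul _ _ X (hc _) (hc _), cfc_id' ℝ X]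
    _ = cfc (·⁺ : ℝ → ℝ) X := cfc_congr fun x _ => by
          split_ifs with h
          · rw [mul_one, posPart_eq_self.mpr h]
          · rw [mul_zero, posPart_eq_zero.mpr (not_le.mp h).le]
    _ = X⁺ := by rw [CFC.posPart_def, cfcₙ_eq_cfc]
  rw [hXP, traceNorm_eq_re_trace_abs, ← Complex.add_re, ← trace_add, CFC.abs_add_self X hX,
    trace_smul]
  simp

lemma sq_sqrt_mul_sqrt_add_sqrt_mul_sqrt_le {p q : ℝ} (hp0 : 0 ≤ p) (hp1 : p ≤ 1) (hq0 : 0 ≤ q)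
    (hq1 : q ≤ 1) : (√q * √p + √(1 - q) * √(1 - p)) ^ 2 ≤ 1 - (p - q) ^ 2 := by
  have ha := Real.sq_sqrt hp0
  have hb := Real.sq_sqrt hq0
  have hc := Real.sq_sqrt (sub_nonneg.mpr hp1)
  have he := Real.sq_sqrt (sub_nonneg.mpr hq1)
  -- `1 - (√q√p + √(1-q)√(1-p))² = (√p√(1-q) - √q√(1-p))²` and `p - q` is that difference
  -- times `√p√(1-q) + √q√(1-p) ∈ [0, 1]`
  nlinarith [sq_nonneg (√p * √(1 - p) - √q * √(1 - q)), sq_nonneg (√q * √p + √(1 - q) * √(1 - p)),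
    Real.sqrt_nonneg p, Real.sqrt_nonneg q, Real.sqrt_nonneg (1 - p), Real.sqrt_nonneg (1 - q)]

lemma half_traceNorm_sub_le_sqrt_one_sub_fidelity_sq {ρ σ : Matrix (Fin d) (Fin d) ℂ}
    (hρ : 0 ≤ ρ) (hρ1 : ρ.trace = 1) (hσ : 0 ≤ σ) (hσ1 : σ.trace = 1) :
    1 / 2 * traceNorm (ρ - σ) ≤ √(1 - traceNorm (CFC.sqrt ρ * CFC.sqrt σ) ^ 2) := by
  obtain ⟨P, hP0, hP1, hP⟩ :=
    exists_two_mul_re_trace_mul_eq_traceNorm_add (hρ.isSelfAdjoint.sub hσ.isSelfAdjoint)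
  obtain ⟨K, hK, -, htr⟩ := exists_contraction_eq_conjTranspose_mul_abs (CFC.sqrt ρ * CFC.sqrt σ)
  have hP1' : 0 ≤ 1 - P := sub_nonneg.mpr hP1
  set p := (ρ * P).trace.re
  set q := (σ * P).trace.re
  have hρP' : (ρ * (1 - P)).trace.re = 1 - p := by simp [mul_sub, hρ1, p]
  have hσP' : (σ * (1 - P)).trace.re = 1 - q := by simp [mul_sub, hσ1, q]
  have hpq : p - q = 1 / 2 * traceNorm (ρ - σ) := by
    rw [sub_mul, trace_sub, trace_sub, hρ1, hσ1, sub_self, Complex.zero_re, add_zero,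
      Complex.sub_re] at hP
    linarith
  have hF : traceNorm (CFC.sqrt ρ * CFC.sqrt σ) ≤ √q * √p + √(1 - q) * √(1 - p) := by
    have h1 := re_trace_sqrt_mul_mul_sqrt_mul_le hρ hσ hK hP0
    have h2 := re_trace_sqrt_mul_mul_sqrt_mul_le hρ hσ hK hP1'
    rw [hρP', hσP'] at h2
    calc traceNorm (CFC.sqrt ρ * CFC.sqrt σ)
        = (CFC.sqrt σ * K * CFC.sqrt ρ * P + CFC.sqrt σ * K * CFC.sqrt ρ * (1 - P)).trace.re := by
          rw [traceNorm_eq_re_trace_abs, ← htr, ← mul_add, add_sub_cancel, mul_one, mul_assoc,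
            trace_mul_comm, mul_assoc]
    _ ≤ √q * √p + √(1 - q) * √(1 - p) := by
          rw [trace_add, Complex.add_re]
          exact add_le_add h1 h2
  have hp0 := re_trace_mul_nonneg hρ hP0
  have hq0 := re_trace_mul_nonneg hσ hP0
  have hp1 := hρP' ▸ re_trace_mul_nonneg hρ hP1'
  have hq1 := hσP' ▸ re_trace_mul_nonneg hσ hP1'
  have hFsq : traceNorm (CFC.sqrt ρ * CFC.sqrt σ) ^ 2 ≤ 1 - (p - q) ^ 2 :=
    (pow_le_pow_left₀ (traceNorm_nonneg _) hF 2).trans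
      (sq_sqrt_mul_sqrt_add_sqrt_mul_sqrt_le hp0 (by linarith) hq0 (by linarith))
  exact (le_abs_self _).trans (Real.abs_le_sqrt (by rw [← hpq]; linarith))

end QDI

/-- Lemma (Fuchs–van de Graaf type relations between the trace distance, the purified distance
`p(ρ,σ) = √(1 − F(ρ,σ)²)` and the Hilbert–Schmidt distance of matrix square roots):
`½‖ρ−σ‖₁ ≤ p(ρ,σ) ≤ ‖√ρ − √σ‖₂ ≤ √2·p(ρ,σ) ≤ √2·√‖ρ−σ‖₁` for density matrices `ρ, σ`. -/
theorem stmt18 {d : ℕ} (ρ σ : Matrix (Fin d) (Fin d) ℂ)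
    (hρ : ρ.PosSemidef) (hρ1 : ρ.trace = 1)
    (hσ : σ.PosSemidef) (hσ1 : σ.trace = 1) :
    (1 / 2 : ℝ) * traceNorm (ρ - σ) ≤ Real.sqrt (1 - fid hρ hσ ^ 2) ∧
    Real.sqrt (1 - fid hρ hσ ^ 2) ≤ hsNorm (hρ.sqrt - hσ.sqrt) ∧
    hsNorm (hρ.sqrt - hσ.sqrt) ≤ Real.sqrt 2 * Real.sqrt (1 - fid hρ hσ ^ 2) ∧
    Real.sqrt 2 * Real.sqrt (1 - fid hρ hσ ^ 2) ≤
      Real.sqrt 2 * Real.sqrt (traceNorm (ρ - σ)) := by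
  simp only [fid, hρ.sqrt_eq_cfcSqrt, hσ.sqrt_eq_cfcSqrt]
  set F := traceNorm (CFC.sqrt ρ * CFC.sqrt σ)
  set H := hsNorm (CFC.sqrt ρ - CFC.sqrt σ)
  set t := (CFC.sqrt ρ * CFC.sqrt σ).trace.re
  have htF : t ≤ F := re_trace_le_traceNorm _
  have hFt : F ^ 2 ≤ t := traceNorm_sqrt_mul_sqrt_sq_le hρ.nonneg hρ1 hσ.nonneg hσ1
  have hH : H ^ 2 = 2 - 2 * t := hsNorm_sqrt_sub_sqrt_sq hρ.nonneg hρ1 hσ.nonneg hσ1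
  have hPS : H ^ 2 ≤ traceNorm (ρ - σ) := hsNorm_sqrt_sub_sqrt_sq_le_traceNorm hρ.nonneg hσ.nonneg
  have hH0 : 0 ≤ H := Real.sqrt_nonneg _
  refine ⟨half_traceNorm_sub_le_sqrt_one_sub_fidelity_sq hρ.nonneg hρ1 hσ.nonneg hσ1, ?_, ?_, ?_⟩
  · exact (Real.sqrt_le_left hH0).mpr (by nlinarith [sq_nonneg (1 - F)])
  · rw [← Real.sqrt_mul zero_le_two, Real.le_sqrt hH0 (by nlinarith)]
    nlinarith
  · gcongr
    nlinarith [sq_nonneg (1 - F)]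
end
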